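/- Let (M,ρ) be a pseudometric space and X a real Banach space with dim X > 1. Let F assign to each x ∈ M a nonempty compact convex subset F(x) ⊆ X of dimension at most 1 (a point or a closed bounded segment). Assume that for every subset M' ⊆ M with at most 4 points there is a selection f : M' → X with ‖f(x) − f(y)‖ ≤ ρ(x,y) on M'. Let λ1 ≥ 1. Then for every x ∈ M the first balanced refinement F¹(x) = ⋂_{z∈M} (F(z) + λ1·ρ(x,z)·B_X) is a nonempty compact convex set of dimension at most 1. -/

import Mathlib

/-!
`F¹(x)` is an intersection of closed convex sets and, through its `z = x` term, lies in the
compact segment `F x`; so only nonemptiness needs an argument. By compactness of `F x` it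
suffices that finitely many of the sets `F x ∩ (F z + λ₁ ρ(x, z) B_X)` meet. They all lie on the
line through `F x`, so by Helly's theorem in dimension one it suffices that any two of them meet,
and a selection `f` on `{x, z₁, z₂}` gives the common point `f x`.
-/

open Pointwise Metric Finset

theorem Convex.helly_of_subset_line {ι X : Type*} [AddCommGroup X] [Module ℝ X]
    {C : ι → Set X} {a d : X} (hC : ∀ i, Convex ℝ (C i))
    (hline : ∀ i, ∀ y ∈ C i, ∃ t : ℝ, y = a + t • d) {s : Finset ι}
    (h : ∀ I ⊆ s, #I ≤ 2 → (⋂ i ∈ I, C i).Nonempty) :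
    (⋂ i ∈ s, C i).Nonempty := by
  let line : ℝ →ᵃ[ℝ] X := AffineMap.lineMap a (a + d)
  have hline_apply (t : ℝ) : line t = a + t • d := by
    simp [line, AffineMap.lineMap_apply, add_comm]
  obtain ⟨t, ht⟩ : (⋂ i ∈ s, line ⁻¹' C i).Nonempty := by
    refine Convex.helly_theorem' (fun i _ => (hC i).affine_preimage line) fun I hI hI2 => ?_
    rcases I.eq_empty_or_nonempty with rfl | ⟨i₀, hi₀⟩
    · simp
    obtain ⟨y, hy⟩ := h I hI (by simpa using hI2)
    obtain ⟨t, rfl⟩ := hline i₀ y (Set.mem_iInter₂.mp hy i₀ hi₀)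
    exact ⟨t, by simpa [hline_apply] using hy⟩
  exact ⟨line t, by simpa using ht⟩

section BalancedRefinement

variable {M X : Type*} [NormedAddCommGroup X]

def balancedRefinement (ρ : M → M → ℝ) (F : M → Set X) (lam : ℝ) (x : M) : Set X :=
  ⋂ z, F z + closedBall (0 : X) (lam * ρ x z)

def HasLipschitzSelections (ρ : M → M → ℝ) (F : M → Set X) (n : ℕ) : Prop :=
  ∀ M' : Finset M, #M' ≤ n →
    ∃ f : M → X, (∀ x ∈ M', f x ∈ F x) ∧ ∀ x ∈ M', ∀ y ∈ M', ‖f x - f y‖ ≤ ρ x y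

variable {ρ : M → M → ℝ} {F : M → Set X} {lam : ℝ}

theorem isClosed_add_closedBall (hF : ∀ z, IsCompact (F z)) (x z : M) :
    IsClosed (F z + closedBall (0 : X) (lam * ρ x z)) :=
  isClosed_closedBall.add_left_of_isCompact (hF z)

theorem isClosed_balancedRefinement (hF : ∀ z, IsCompact (F z)) (x : M) :
    IsClosed (balancedRefinement ρ F lam x) :=
  isClosed_iInter (isClosed_add_closedBall hF x)

theorem convex_balancedRefinement [NormedSpace ℝ X] (hF : ∀ z, Convex ℝ (F z)) (x : M) :
    Convex ℝ (balancedRefinement ρ F lam x) :=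
  convex_iInter fun z => (hF z).add (convex_closedBall _ _)

theorem balancedRefinement_subset {x : M} (hρ : ρ x x = 0) :
    balancedRefinement ρ F lam x ⊆ F x := fun y hy => by
  simpa [hρ] using Set.mem_iInter.mp hy x

theorem nonempty_biInter_inter_add_closedBall (hlam : 1 ≤ lam)
    (hsel : HasLipschitzSelections ρ F 3)
    (x : M) {I : Finset M} (hI : #I ≤ 2) :
    (⋂ z ∈ I, F x ∩ (F z + closedBall (0 : X) (lam * ρ x z))).Nonempty := by
  classical
  obtain ⟨f, hfF, hfρ⟩ := hsel (insert x I) ((card_insert_le x I).trans (by omega))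
  refine ⟨f x, Set.mem_iInter₂.mpr fun z hz => ⟨hfF x (mem_insert_self x I), ?_⟩⟩
  have hzI : z ∈ insert x I := mem_insert_of_mem hz
  have hdist : ‖f x - f z‖ ≤ ρ x z := hfρ x (mem_insert_self x I) z hzI
  refine Set.mem_add.mpr ⟨f z, hfF z hzI, f x - f z, ?_, add_sub_cancel _ _⟩
  rw [mem_closedBall_zero_iff]
  exact hdist.trans (le_mul_of_one_le_left ((norm_nonneg _).trans hdist) hlam)

theorem balancedRefinement_nonempty [NormedSpace ℝ X] (hlam : 1 ≤ lam)
    (hFcp : ∀ x, IsCompact (F x)) (hFcv : ∀ x, Convex ℝ (F x))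
    (hsel : HasLipschitzSelections ρ F 3) {x : M} {a d : X}
    (hline : ∀ y ∈ F x, ∃ t : ℝ, y = a + t • d) :
    (balancedRefinement ρ F lam x).Nonempty := by
  classical
  have hfinite (u : Finset M) :
      (⋂ z ∈ u, F x ∩ (F z + closedBall (0 : X) (lam * ρ x z))).Nonempty :=
    Convex.helly_of_subset_line
      (fun z => (hFcv x).inter ((hFcv z).add (convex_closedBall _ _))) (fun z y hy => hline y hy.1)
      fun I _ hI => nonempty_biInter_inter_add_closedBall hlam hsel x hI
  -- inserting `x` keeps the index set nonempty, so the common point lies in `F x`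
  have hcompact := (hFcp x).inter_iInter_nonempty _ (isClosed_add_closedBall hFcp x) fun u =>
    (hfinite (insert x u)).mono fun y hy =>
      have hy := Set.mem_iInter₂.mp hy
      ⟨(hy x (mem_insert_self x u)).1,
        Set.mem_iInter₂.mpr fun z hz => (hy z (mem_insert_of_mem hz)).2⟩
  exact hcompact.mono Set.inter_subset_right

end BalancedRefinement

theorem first_refinement_one_dim_general
    {M : Type*} (ρ : M → M → ℝ)
    (hρ_refl : ∀ x, ρ x x = 0)
    {X : Type*} [NormedAddCommGroup X] [NormedSpace ℝ X]
    (F : M → Set X)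
    (hFcp : ∀ x, IsCompact (F x))
    (hFcv : ∀ x, Convex ℝ (F x))
    -- every set `F x` has dimension at most 1: it lies on a line
    (hFdim : ∀ x, ∃ a d : X, ∀ y ∈ F x, ∃ t : ℝ, y = a + t • d)
    -- finiteness hypothesis: selections on subsets of at most 4 points
    (hfin : ∀ M' : Finset M, M'.card ≤ 4 →
      ∃ f : M → X, (∀ x ∈ M', f x ∈ F x) ∧
        ∀ x ∈ M', ∀ y ∈ M', ‖f x - f y‖ ≤ ρ x y)
    (lam1 : ℝ) (hlam1 : 1 ≤ lam1)
    (F1 : M → Set X)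
    (hF1 : ∀ x, F1 x = ⋂ z, F z + closedBall (0 : X) (lam1 * ρ x z)) :
    ∀ x, (F1 x).Nonempty ∧ IsCompact (F1 x) ∧ Convex ℝ (F1 x) ∧
      ∃ a d : X, ∀ y ∈ F1 x, ∃ t : ℝ, y = a + t • d := by
  intro x
  have hF1x : F1 x = balancedRefinement ρ F lam1 x := hF1 x
  have hsub : F1 x ⊆ F x := hF1x ▸ balancedRefinement_subset (hρ_refl x)
  obtain ⟨a, d, hline⟩ := hFdim x
  have hsel : HasLipschitzSelections ρ F 3 := fun M' hM' => hfin M' (by omega)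
  refine ⟨hF1x ▸ balancedRefinement_nonempty hlam1 hFcp hFcv hsel hline,
    (hFcp x).of_isClosed_subset (hF1x ▸ isClosed_balancedRefinement hFcp x) hsub,
    hF1x ▸ convex_balancedRefinement hFcv x, a, d, fun y hy => hline y (hsub hy)⟩

theorem first_refinement_one_dim
    {M : Type*} (ρ : M → M → ℝ)
    (hρ_refl : ∀ x, ρ x x = 0)
    (hρ_symm : ∀ x y, ρ x y = ρ y x)
    (hρ_tri : ∀ x y z, ρ x z ≤ ρ x y + ρ y z)
    {X : Type*} [NormedAddCommGroup X] [NormedSpace ℝ X] [CompleteSpace X]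
    (hdim : 1 < Module.rank ℝ X)
    (F : M → Set X)
    (hFne : ∀ x, (F x).Nonempty)
    (hFcp : ∀ x, IsCompact (F x))
    (hFcv : ∀ x, Convex ℝ (F x))
    -- every set `F x` has dimension at most 1: it lies on a line
    (hFdim : ∀ x, ∃ a d : X, ∀ y ∈ F x, ∃ t : ℝ, y = a + t • d)
    -- finiteness hypothesis: selections on subsets of at most 4 points
    (hfin : ∀ M' : Finset M, M'.card ≤ 4 →
      ∃ f : M → X, (∀ x ∈ M', f x ∈ F x) ∧
        ∀ x ∈ M', ∀ y ∈ M', ‖f x - f y‖ ≤ ρ x y)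
    (lam1 : ℝ) (hlam1 : 1 ≤ lam1)
    (F1 : M → Set X)
    (hF1 : ∀ x, F1 x = ⋂ z, F z + closedBall (0 : X) (lam1 * ρ x z)) :
    ∀ x, (F1 x).Nonempty ∧ IsCompact (F1 x) ∧ Convex ℝ (F1 x) ∧
      ∃ a d : X, ∀ y ∈ F1 x, ∃ t : ℝ, y = a + t • d :=
  first_refinement_one_dim_general ρ hρ_refl F hFcp hFcv hFdim hfin lam1 hlam1 F1 hF1
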